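/- arXiv:2102.13380 — 2 statements merged into one kernel-verified Lean document; each statement's English description precedes it below -/
import Mathlib

section
/- Distance bound between weak and Wasserstein barycenters: let ν_1,…,ν_n ∈ P₂(ℝ^d) be absolutely continuous, at least one with bounded density; let μ̄ be a weak barycenter and μ̃ the Wasserstein barycenter. Then W₂²(μ̄, μ̃) ≤ 2 Σ_{i=1}^n λ_i ( E‖Y_i‖² − ‖E Y_i‖² ), where Y_i ∼ ν_i; i.e., the squared distance between the barycenters is bounded by twice the average of the traces of the covariances of the ν_i. -/
open MeasureTheory
open scoped ENNReal

noncomputable section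

variable {E : Type*} [NormedAddCommGroup E] [NormedSpace ℝ E] [CompleteSpace E]
  [MeasurableSpace E] [BorelSpace E]

/-- The σ-algebra on `E × E` generated by the first coordinate. -/
def firstCoord (E : Type*) [MeasurableSpace E] : MeasurableSpace (E × E) :=
  MeasurableSpace.comap Prod.fst inferInstance

/-- Barycentric projection of a coupling `π`: the conditional expectation of the second
coordinate given the first coordinate, as a function on `E × E`. -/
noncomputable def baryProj (π : Measure (E × E)) : E × E → E :=
  π[fun p => p.2 | firstCoord E]

/-- `π` is a coupling of `μ` and `ν`. -/
def IsCoupling (π : Measure (E × E)) (μ ν : Measure E) : Prop :=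
  IsProbabilityMeasure π ∧ π.map Prod.fst = μ ∧ π.map Prod.snd = ν

/-- Optimal weak transport cost `V(μ|ν)` with quadratic barycentric cost. -/
noncomputable def weakCost (μ ν : Measure E) : ℝ :=
  sInf { c | ∃ π : Measure (E × E), IsCoupling π μ ν ∧
    c = ∫ p, ‖p.1 - baryProj π p‖ ^ 2 ∂π }

/-- Squared Wasserstein-2 distance (as an infimum over couplings). -/
noncomputable def W2sq (μ ν : Measure E) : ℝ :=
  sInf { c | ∃ π : Measure (E × E), IsCoupling π μ ν ∧
    c = ∫ p, ‖p.1 - p.2‖ ^ 2 ∂π }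

/-- Convex order of probability measures. -/
def ConvexOrder (η ν : Measure E) : Prop :=
  ∀ φ : E → ℝ, ConvexOn ℝ Set.univ φ →
    Integrable φ η → Integrable φ ν → ∫ x, φ x ∂η ≤ ∫ x, φ x ∂ν

/-- The centered version of a measure: pushforward by subtracting the mean. -/
noncomputable def centered (μ : Measure E) : Measure E :=
  μ.map (fun x => x - ∫ y, y ∂μ)

/-- `μ` is a weak barycenter of the family `ν` with weights `lam`. -/
def IsWeakBarycenter {n : ℕ} (lam : Fin n → ℝ) (ν : Fin n → Measure E) (μ : Measure E) : Prop :=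
  IsProbabilityMeasure μ ∧ Integrable (fun x => ‖x‖ ^ 2) μ ∧
  ∀ ρ : Measure E, IsProbabilityMeasure ρ → Integrable (fun x => ‖x‖ ^ 2) ρ →
    ∑ i, lam i * weakCost μ (ν i) ≤ ∑ i, lam i * weakCost ρ (ν i)

end

/-- `μ` is a Wasserstein barycenter of the family `ν` with weights `lam`. -/
def IsW2Barycenter {E : Type*} [NormedAddCommGroup E] [NormedSpace ℝ E] [CompleteSpace E]
    [MeasurableSpace E] [BorelSpace E]
    {n : ℕ} (lam : Fin n → ℝ) (ν : Fin n → Measure E) (μ : Measure E) : Prop :=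
  IsProbabilityMeasure μ ∧ Integrable (fun x => ‖x‖ ^ 2) μ ∧
  ∀ ρ : Measure E, IsProbabilityMeasure ρ → Integrable (fun x => ‖x‖ ^ 2) ρ →
    ∑ i, lam i * W2sq μ (ν i) ≤ ∑ i, lam i * W2sq ρ (ν i)

set_option linter.unusedSectionVars false
set_option maxHeartbeats 2000000
open scoped RealInnerProductSpace

noncomputable section Helpers

open scoped RealInnerProductSpace

variable {H : Type*} [NormedAddCommGroup H] [InnerProductSpace ℝ H] [CompleteSpace H]
  [MeasurableSpace H] [BorelSpace H] [SecondCountableTopology H]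

namespace WB

/-- mean of a measure -/
def mea (μ : Measure H) : H := ∫ x, x ∂μ

/-- variance -/
def va (μ : Measure H) : ℝ := ∫ x, ‖x - mea μ‖ ^ 2 ∂μ

lemma va_nonneg (μ : Measure H) : 0 ≤ va μ := by
  refine integral_nonneg fun x => by positivity

lemma memLp2 {μ : Measure H} (h2 : Integrable (fun x => ‖x‖ ^ 2) μ) : MemLp id 2 μ :=
  (memLp_two_iff_integrable_sq_norm aestronglyMeasurable_id).2 h2

lemma integrable_of_memLp2 {α : Type*} [MeasurableSpace α] {ρ : Measure α} [IsFiniteMeasure ρ]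
    {f : α → H} (hf : MemLp f 2 ρ) : Integrable f ρ :=
  hf.integrable one_le_two

lemma sq_int_of_memLp2 {α : Type*} [MeasurableSpace α] {ρ : Measure α}
    {f : α → H} (hf : MemLp f 2 ρ) : Integrable (fun a => ‖f a‖ ^ 2) ρ :=
  (memLp_two_iff_integrable_sq_norm hf.1).1 hf

lemma integrable_id' {μ : Measure H} [IsFiniteMeasure μ] (h2 : Integrable (fun x => ‖x‖ ^ 2) μ) :
    Integrable (fun x : H => x) μ := (memLp2 h2).integrable one_le_two

section CS

variable {α : Type*} [MeasurableSpace α] {ρ : Measure α} {f g : α → H}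

lemma integrable_inner2 (hf : MemLp f 2 ρ) (hg : MemLp g 2 ρ) :
    Integrable (fun a => ⟪f a, g a⟫) ρ := by
  have hint : Integrable (fun a => ‖f a‖ ^ 2 + ‖g a‖ ^ 2) ρ :=
    (sq_int_of_memLp2 hf).add (sq_int_of_memLp2 hg)
  refine hint.mono' (hf.1.inner hg.1) ?_
  filter_upwards with a
  have h1 : ‖⟪f a, g a⟫‖ ≤ ‖f a‖ * ‖g a‖ := norm_inner_le_norm _ _
  nlinarith [sq_nonneg (‖f a‖ - ‖g a‖), norm_nonneg (f a), norm_nonneg (g a)]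

lemma integrable_norm_mul (hf : MemLp f 2 ρ) (hg : MemLp g 2 ρ) :
    Integrable (fun a => ‖f a‖ * ‖g a‖) ρ := by
  have hint : Integrable (fun a => ‖f a‖ ^ 2 + ‖g a‖ ^ 2) ρ :=
    (sq_int_of_memLp2 hf).add (sq_int_of_memLp2 hg)
  refine hint.mono' (hf.1.norm.mul hg.1.norm) ?_
  filter_upwards with a
  have : 0 ≤ ‖f a‖ * ‖g a‖ := by positivity
  rw [Real.norm_of_nonneg this]
  nlinarith [sq_nonneg (‖f a‖ - ‖g a‖)]

/-- Cauchy–Schwarz for integrals. -/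
lemma integral_inner_le_sqrt (hf : MemLp f 2 ρ) (hg : MemLp g 2 ρ) :
    ∫ a, ⟪f a, g a⟫ ∂ρ ≤
      Real.sqrt (∫ a, ‖f a‖ ^ 2 ∂ρ) * Real.sqrt (∫ a, ‖g a‖ ^ 2 ∂ρ) := by
  have h1 : ∫ a, ⟪f a, g a⟫ ∂ρ ≤ ∫ a, ‖f a‖ * ‖g a‖ ∂ρ := by
    refine integral_mono (integrable_inner2 hf hg) (integrable_norm_mul hf hg) fun a => ?_
    exact (real_inner_le_norm _ _)
  have hpq : Real.HolderConjugate 2 2 := ⟨by norm_num, by norm_num, by norm_num⟩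
  have h2 := integral_mul_le_Lp_mul_Lq_of_nonneg (μ := ρ) hpq
    (f := fun a => ‖f a‖) (g := fun a => ‖g a‖)
    (Filter.Eventually.of_forall fun a => norm_nonneg _)
    (Filter.Eventually.of_forall fun a => norm_nonneg _)
    (by simpa using hf.norm) (by simpa using hg.norm)
  have hconv : ∀ (u : α → H), (∫ a, ‖u a‖ ^ (2:ℝ) ∂ρ) ^ (1/(2:ℝ))
      = Real.sqrt (∫ a, ‖u a‖ ^ 2 ∂ρ) := by
    intro u
    rw [Real.sqrt_eq_rpow]
    congr 1
    refine integral_congr_ae (Filter.Eventually.of_forall fun a => ?_)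
    norm_cast
  rw [hconv f, hconv g] at h2
  exact h1.trans h2

end CS

section Coupling

variable {π : Measure (H × H)} {μ ν : Measure H}

lemma isCoupling_prod (μ ν : Measure H) [IsProbabilityMeasure μ] [IsProbabilityMeasure ν] :
    IsCoupling (μ.prod ν) μ ν := by
  refine ⟨inferInstance, ?_, ?_⟩ <;> simp

lemma _root_.IsCoupling.int_fst {F : Type*} [NormedAddCommGroup F] [NormedSpace ℝ F]
    (h : IsCoupling π μ ν) {f : H → F} (hf : AEStronglyMeasurable f μ) :
    ∫ p, f p.1 ∂π = ∫ x, f x ∂μ := by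
  rw [← h.2.1] at hf ⊢
  exact (integral_map measurable_fst.aemeasurable hf).symm

lemma _root_.IsCoupling.int_snd {F : Type*} [NormedAddCommGroup F] [NormedSpace ℝ F]
    (h : IsCoupling π μ ν) {f : H → F} (hf : AEStronglyMeasurable f ν) :
    ∫ p, f p.2 ∂π = ∫ x, f x ∂ν := by
  rw [← h.2.2] at hf ⊢
  exact (integral_map measurable_snd.aemeasurable hf).symm

lemma _root_.IsCoupling.memLp2_fst (h : IsCoupling π μ ν) (h2 : Integrable (fun x => ‖x‖ ^ 2) μ) :
    MemLp (fun p : H × H => p.1) 2 π := by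
  have h' := memLp2 h2
  rw [← h.2.1] at h'
  exact (memLp_map_measure_iff aestronglyMeasurable_id measurable_fst.aemeasurable).1 h'

lemma _root_.IsCoupling.memLp2_snd (h : IsCoupling π μ ν) (h2 : Integrable (fun x => ‖x‖ ^ 2) ν) :
    MemLp (fun p : H × H => p.2) 2 π := by
  have h' := memLp2 h2
  rw [← h.2.2] at h'
  exact (memLp_map_measure_iff aestronglyMeasurable_id measurable_snd.aemeasurable).1 h'

end Coupling

end WB

end Helpers

noncomputable section Chunk2

open scoped RealInnerProductSpace

variable {H : Type*} [NormedAddCommGroup H] [InnerProductSpace ℝ H] [CompleteSpace H]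
  [MeasurableSpace H] [BorelSpace H] [SecondCountableTopology H]

namespace WB

section Expand

variable {α : Type*} [MeasurableSpace α] {ρ : Measure α} {u v : α → H}

lemma integral_norm_sub_sq (hu : MemLp u 2 ρ) (hv : MemLp v 2 ρ) :
    ∫ a, ‖u a - v a‖ ^ 2 ∂ρ
      = ∫ a, ‖u a‖ ^ 2 ∂ρ - 2 * ∫ a, ⟪u a, v a⟫ ∂ρ + ∫ a, ‖v a‖ ^ 2 ∂ρ := by
  have h1 : ∀ a, ‖u a - v a‖ ^ 2 = ‖u a‖ ^ 2 - 2 * ⟪u a, v a⟫ + ‖v a‖ ^ 2 :=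
    fun a => norm_sub_sq_real _ _
  simp_rw [h1]
  rw [integral_add (f := fun a => ‖u a‖ ^ 2 - 2 * ⟪u a, v a⟫) (g := fun a => ‖v a‖ ^ 2)
      ((sq_int_of_memLp2 hu).sub ((integrable_inner2 hu hv).const_mul 2))
      (sq_int_of_memLp2 hv),
    integral_sub (f := fun a => ‖u a‖ ^ 2) (g := fun a => 2 * ⟪u a, v a⟫)
      (sq_int_of_memLp2 hu) ((integrable_inner2 hu hv).const_mul 2),
    integral_const_mul 2 _]

lemma integral_norm_add_const_sq [IsProbabilityMeasure ρ] (hu : MemLp u 2 ρ) (c : H) :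
    ∫ a, ‖u a + c‖ ^ 2 ∂ρ
      = ∫ a, ‖u a‖ ^ 2 ∂ρ + 2 * ⟪∫ a, u a ∂ρ, c⟫ + ‖c‖ ^ 2 := by
  have h1 : ∀ a, ‖u a + c‖ ^ 2 = ‖u a‖ ^ 2 + 2 * ⟪u a, c⟫ + ‖c‖ ^ 2 :=
    fun a => norm_add_sq_real _ _
  simp_rw [h1]
  have hic : Integrable (fun a => ⟪u a, c⟫) ρ := (integrable_of_memLp2 hu).inner_const c
  rw [integral_add (f := fun a => ‖u a‖ ^ 2 + 2 * ⟪u a, c⟫) (g := fun _ => ‖c‖ ^ 2)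
      ((sq_int_of_memLp2 hu).add (hic.const_mul 2)) (integrable_const _),
    integral_add (f := fun a => ‖u a‖ ^ 2) (g := fun a => 2 * ⟪u a, c⟫)
      (sq_int_of_memLp2 hu) (hic.const_mul 2), integral_const_mul 2 _, integral_const]
  have h2 : ∫ a, ⟪u a, c⟫ ∂ρ = ⟪∫ a, u a ∂ρ, c⟫ := by
    calc ∫ a, ⟪u a, c⟫ ∂ρ = ∫ a, ⟪c, u a⟫ ∂ρ :=
          integral_congr_ae (Filter.Eventually.of_forall fun a => real_inner_comm _ _)
      _ = ⟪c, ∫ a, u a ∂ρ⟫ := integral_inner (integrable_of_memLp2 hu) c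
      _ = ⟪∫ a, u a ∂ρ, c⟫ := real_inner_comm _ _
  rw [h2]; simp

end Expand

section Cost

variable {π : Measure (H × H)} {μ ν : Measure H}

/-- master cost formula for affinely transformed first coordinate -/
lemma cost_affine (h : IsCoupling π μ ν) (h2μ : Integrable (fun x => ‖x‖ ^ 2) μ)
    (h2ν : Integrable (fun x => ‖x‖ ^ 2) ν) (z : H) (t : ℝ) :
    ∫ p, ‖(z + t • (p.1 - mea μ)) - p.2‖ ^ 2 ∂π
      = t ^ 2 * va μ - 2 * t * (∫ p, ⟪p.1 - mea μ, p.2 - mea ν⟫ ∂π) + va ν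
        + ‖z - mea ν‖ ^ 2 := by
  haveI := h.1
  have hu : MemLp (fun p : H × H => p.1 - mea μ) 2 π :=
    (h.memLp2_fst h2μ).sub (memLp_const _)
  have hv : MemLp (fun p : H × H => p.2 - mea ν) 2 π :=
    (h.memLp2_snd h2ν).sub (memLp_const _)
  have key : ∀ p : H × H, (z + t • (p.1 - mea μ)) - p.2
      = (t • (p.1 - mea μ) - (p.2 - mea ν)) + (z - mea ν) := fun p => by abel
  simp_rw [key]
  have huv : MemLp (fun p : H × H => t • (p.1 - mea μ) - (p.2 - mea ν)) 2 π :=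
    (hu.const_smul t).sub hv
  rw [integral_norm_add_const_sq huv (z - mea ν)]
  have hzero : ∫ p, (t • (p.1 - mea μ) - (p.2 - mea ν)) ∂π = 0 := by
    have hu1 : Integrable (fun p : H × H => p.1 - mea μ) π := integrable_of_memLp2 hu
    have hv1 : Integrable (fun p : H × H => p.2 - mea ν) π := integrable_of_memLp2 hv
    rw [integral_sub (f := fun p : H × H => t • (p.1 - mea μ))
      (g := fun p : H × H => p.2 - mea ν) (hu1.smul t) hv1,
      integral_smul]
    have hfst : Integrable (fun p : H × H => p.1) π := integrable_of_memLp2 (h.memLp2_fst h2μ)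
    have hsnd : Integrable (fun p : H × H => p.2) π := integrable_of_memLp2 (h.memLp2_snd h2ν)
    have e1 : ∫ p, (p.1 - mea μ) ∂π = 0 := by
      rw [integral_sub (f := fun p : H × H => p.1) (g := fun _ => mea μ) hfst
        (integrable_const _), integral_const]
      have h' := h.int_fst (f := fun x : H => x) aestronglyMeasurable_id
      simp only [probReal_univ, one_smul]
      rw [h']; simp [mea]
    have e2 : ∫ p, (p.2 - mea ν) ∂π = 0 := by
      rw [integral_sub (f := fun p : H × H => p.2) (g := fun _ => mea ν) hsnd
        (integrable_const _), integral_const]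
      have h' := h.int_snd (f := fun x : H => x) aestronglyMeasurable_id
      simp only [probReal_univ, one_smul]
      rw [h']; simp [mea]
    rw [e1, e2]; simp
  rw [hzero, inner_zero_left]
  have hexp : ∫ p, ‖t • (p.1 - mea μ) - (p.2 - mea ν)‖ ^ 2 ∂π
      = t ^ 2 * (∫ p, ‖p.1 - mea μ‖ ^ 2 ∂π) - 2 * t * (∫ p, ⟪p.1 - mea μ, p.2 - mea ν⟫ ∂π)
        + ∫ p, ‖p.2 - mea ν‖ ^ 2 ∂π := by
    rw [integral_norm_sub_sq (u := fun p : H × H => t • (p.1 - mea μ)) (hu.const_smul t) hv]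
    have e3 : ∫ p, ‖t • (p.1 - mea μ)‖ ^ 2 ∂π = t ^ 2 * ∫ p, ‖p.1 - mea μ‖ ^ 2 ∂π := by
      rw [← integral_const_mul (t ^ 2) _]
      refine integral_congr_ae (Filter.Eventually.of_forall fun p => ?_)
      show ‖t • (p.1 - mea μ)‖ ^ 2 = t ^ 2 * ‖p.1 - mea μ‖ ^ 2
      rw [norm_smul]
      simp [mul_pow, sq_abs]
    have e4 : ∫ p, ⟪t • (p.1 - mea μ), p.2 - mea ν⟫ ∂π
        = t * ∫ p, ⟪p.1 - mea μ, p.2 - mea ν⟫ ∂π := by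
      rw [← integral_const_mul t _]
      refine integral_congr_ae (Filter.Eventually.of_forall fun p => ?_)
      show ⟪t • (p.1 - mea μ), p.2 - mea ν⟫ = t * ⟪p.1 - mea μ, p.2 - mea ν⟫
      rw [real_inner_smul_left]
    rw [e3, e4]; ring
  rw [hexp]
  have m1 : ∫ p, ‖p.1 - mea μ‖ ^ 2 ∂π = va μ :=
    h.int_fst (f := fun x => ‖x - mea μ‖ ^ 2)
      (((continuous_id.sub continuous_const).norm.pow 2).aestronglyMeasurable)
  have m2 : ∫ p, ‖p.2 - mea ν‖ ^ 2 ∂π = va ν :=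
    h.int_snd (f := fun x => ‖x - mea ν‖ ^ 2)
      (((continuous_id.sub continuous_const).norm.pow 2).aestronglyMeasurable)
  rw [m1, m2]; ring

lemma Cpi_le (h : IsCoupling π μ ν) (h2μ : Integrable (fun x => ‖x‖ ^ 2) μ)
    (h2ν : Integrable (fun x => ‖x‖ ^ 2) ν) :
    (∫ p, ⟪p.1 - mea μ, p.2 - mea ν⟫ ∂π) ≤ Real.sqrt (va μ) * Real.sqrt (va ν) := by
  haveI := h.1
  have hu : MemLp (fun p : H × H => p.1 - mea μ) 2 π :=
    (h.memLp2_fst h2μ).sub (memLp_const _)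
  have hv : MemLp (fun p : H × H => p.2 - mea ν) 2 π :=
    (h.memLp2_snd h2ν).sub (memLp_const _)
  have := integral_inner_le_sqrt hu hv
  have m1 : ∫ p, ‖p.1 - mea μ‖ ^ 2 ∂π = va μ :=
    h.int_fst (f := fun x => ‖x - mea μ‖ ^ 2)
      (((continuous_id.sub continuous_const).norm.pow 2).aestronglyMeasurable)
  have m2 : ∫ p, ‖p.2 - mea ν‖ ^ 2 ∂π = va ν :=
    h.int_snd (f := fun x => ‖x - mea ν‖ ^ 2)
      (((continuous_id.sub continuous_const).norm.pow 2).aestronglyMeasurable)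
  rwa [m1, m2] at this

lemma Cprod_zero (μ ν : Measure H) [IsProbabilityMeasure μ] [IsProbabilityMeasure ν]
    (h2μ : Integrable (fun x => ‖x‖ ^ 2) μ) (h2ν : Integrable (fun x => ‖x‖ ^ 2) ν) :
    ∫ p, ⟪p.1 - mea μ, p.2 - mea ν⟫ ∂(μ.prod ν) = 0 := by
  have hc := isCoupling_prod μ ν
  have hint : Integrable (fun p : H × H => ⟪p.1 - mea μ, p.2 - mea ν⟫) (μ.prod ν) :=
    integrable_inner2 ((hc.memLp2_fst h2μ).sub (memLp_const _))
      ((hc.memLp2_snd h2ν).sub (memLp_const _))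
  rw [integral_prod _ hint]
  have h0 : ∀ x : H, ∫ y, ⟪x - mea μ, y - mea ν⟫ ∂ν = 0 := by
    intro x
    rw [integral_inner (f := fun y : H => y - mea ν)
      ((integrable_id' h2ν).sub (integrable_const _))]
    have : ∫ y, (y - mea ν) ∂ν = 0 := by
      rw [integral_sub (integrable_id' h2ν) (integrable_const _), integral_const]
      simp [mea]
    rw [this, inner_zero_right]
  simp_rw [h0]
  simp

lemma _root_.IsCoupling.map_first (h : IsCoupling π μ ν) {φ : H → H} (hφ : Measurable φ) :
    IsCoupling (π.map (fun p => (φ p.1, p.2))) (μ.map φ) ν := by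
  have hg : Measurable (fun p : H × H => (φ p.1, p.2)) :=
    (hφ.comp measurable_fst).prodMk measurable_snd
  haveI := h.1
  refine ⟨Measure.isProbabilityMeasure_map hg.aemeasurable, ?_, ?_⟩
  · rw [Measure.map_map measurable_fst hg, ← h.2.1, Measure.map_map hφ measurable_fst]
    rfl
  · rw [Measure.map_map measurable_snd hg, ← h.2.2]
    rfl

end Cost

section Inf

variable {μ ν : Measure H} {π : Measure (H × H)}

lemma W2set_bdd (μ ν : Measure H) :
    BddBelow { c | ∃ π : Measure (H × H), IsCoupling π μ ν ∧
      c = ∫ p, ‖p.1 - p.2‖ ^ 2 ∂π } := by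
  refine ⟨0, ?_⟩
  rintro c ⟨π, hπ, rfl⟩
  exact integral_nonneg fun p => by positivity

lemma W2sq_le_cost (hπ : IsCoupling π μ ν) :
    W2sq μ ν ≤ ∫ p, ‖p.1 - p.2‖ ^ 2 ∂π :=
  csInf_le (W2set_bdd μ ν) ⟨π, hπ, rfl⟩

lemma W2_exists_coupling (μ ν : Measure H) [IsProbabilityMeasure μ] [IsProbabilityMeasure ν]
    {ε : ℝ} (hε : 0 < ε) :
    ∃ π : Measure (H × H), IsCoupling π μ ν ∧
      ∫ p, ‖p.1 - p.2‖ ^ 2 ∂π < W2sq μ ν + ε := by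
  obtain ⟨c, hc, hlt⟩ := Real.lt_sInf_add_pos
    (⟨_, ⟨μ.prod ν, isCoupling_prod μ ν, rfl⟩⟩ :
      Set.Nonempty { c | ∃ π : Measure (H × H), IsCoupling π μ ν ∧
        c = ∫ p, ‖p.1 - p.2‖ ^ 2 ∂π }) hε
  obtain ⟨π, hπ, rfl⟩ := hc
  exact ⟨π, hπ, hlt⟩

lemma weakset_bdd (μ ν : Measure H) :
    BddBelow { c | ∃ π : Measure (H × H), IsCoupling π μ ν ∧
      c = ∫ p, ‖p.1 - baryProj π p‖ ^ 2 ∂π } := by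
  refine ⟨0, ?_⟩
  rintro c ⟨π, hπ, rfl⟩
  exact integral_nonneg fun p => by positivity

lemma weakCost_le_cost (hπ : IsCoupling π μ ν) :
    weakCost μ ν ≤ ∫ p, ‖p.1 - baryProj π p‖ ^ 2 ∂π :=
  csInf_le (weakset_bdd μ ν) ⟨π, hπ, rfl⟩

lemma le_weakCost [IsProbabilityMeasure μ] [IsProbabilityMeasure ν] {b : ℝ}
    (hb : ∀ π : Measure (H × H), IsCoupling π μ ν →
      b ≤ ∫ p, ‖p.1 - baryProj π p‖ ^ 2 ∂π) :
    b ≤ weakCost μ ν := by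
  refine le_csInf ⟨_, ⟨μ.prod ν, isCoupling_prod μ ν, rfl⟩⟩ ?_
  rintro c ⟨π, hπ, rfl⟩
  exact hb π hπ

end Inf

end WB

end Chunk2

noncomputable section Chunk3

open scoped RealInnerProductSpace

variable {H : Type*} [NormedAddCommGroup H] [InnerProductSpace ℝ H] [CompleteSpace H]
  [MeasurableSpace H] [BorelSpace H] [SecondCountableTopology H]

namespace WB

section Condexp

variable {α : Type*} {m m0 : MeasurableSpace α} {ρ : Measure α} [IsFiniteMeasure ρ] {f : α → H}

lemma condexp_eq_condexpL2 (hm : m ≤ m0) (hf : MemLp f 2 ρ) :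
    ρ[f|m] =ᵐ[ρ] (condExpL2 H ℝ hm (hf.toLp f) : α → H) := by
  refine (ae_eq_condExp_of_forall_setIntegral_eq hm (hf.integrable one_le_two)
    (fun s _ _ => (integrable_condExpL2_of_isFiniteMeasure hm).integrableOn)
    (fun s hs hμs => ?_) (aestronglyMeasurable_condExpL2 hm _)).symm
  rw [integral_condExpL2_eq hm (hf.toLp f) hs hμs.ne]
  exact setIntegral_congr_ae (hm s hs) ((hf.coeFn_toLp).mono fun x hx _ => hx)

lemma memLp2_condexp (hm : m ≤ m0) (hf : MemLp f 2 ρ) : MemLp (ρ[f|m]) 2 ρ :=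
  (Lp.memLp ((condExpL2 H ℝ hm (hf.toLp f) : α →₂[ρ] H))).ae_eq
    (condexp_eq_condexpL2 hm hf).symm

lemma integral_sq_eq_lintegral (X : α →₂[ρ] H) :
    ∫ a, ‖X a‖ ^ 2 ∂ρ = (∫⁻ a, (‖X a‖₊ : ℝ≥0∞) ^ (2 : ℝ) ∂ρ).toReal := by
  have h := L2.integral_inner_eq_sq_eLpNorm (𝕜 := ℝ) X
  simp_rw [real_inner_self_eq_norm_sq] at h
  exact h

lemma lintegral_sq_lt_top (X : α →₂[ρ] H) :
    (∫⁻ a, (‖X a‖₊ : ℝ≥0∞) ^ (2 : ℝ) ∂ρ) < ⊤ := by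
  have h := Lp.eLpNorm_lt_top X
  rw [eLpNorm_eq_lintegral_rpow_enorm_toReal two_ne_zero ENNReal.ofNat_ne_top] at h
  simp only [ENNReal.toReal_ofNat, enorm_eq_nnnorm] at h
  have h2 : (0:ℝ) < 1/2 := by norm_num
  by_contra hc
  push_neg at hc
  rw [top_le_iff.1 hc] at h
  simp [ENNReal.top_rpow_of_pos h2] at h

lemma integral_sq_condexp_le (hm : m ≤ m0) (hf : MemLp f 2 ρ) :
    ∫ a, ‖(ρ[f|m]) a‖ ^ 2 ∂ρ ≤ ∫ a, ‖f a‖ ^ 2 ∂ρ := by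
  have h1 : ∫ a, ‖(ρ[f|m]) a‖ ^ 2 ∂ρ
      = ∫ a, ‖((condExpL2 H ℝ hm (hf.toLp f) : α →₂[ρ] H)) a‖ ^ 2 ∂ρ :=
    integral_congr_ae ((condexp_eq_condexpL2 hm hf).mono fun a ha => by simp only [ha])
  have h2 : ∫ a, ‖f a‖ ^ 2 ∂ρ = ∫ a, ‖(hf.toLp f) a‖ ^ 2 ∂ρ :=
    integral_congr_ae ((hf.coeFn_toLp).symm.mono fun a ha => by simp only [← ha])
  set F := hf.toLp f with hF
  set G := ((condExpL2 H ℝ hm F : α →₂[ρ] H)) with hG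
  rw [h1, h2, integral_sq_eq_lintegral G, integral_sq_eq_lintegral F]
  refine ENNReal.toReal_mono (lintegral_sq_lt_top F).ne ?_
  have hle : eLpNorm (G : α → H) 2 ρ ≤ eLpNorm (F : α → H) 2 ρ := eLpNorm_condExpL2_le hm F
  rw [eLpNorm_eq_lintegral_rpow_enorm_toReal two_ne_zero ENNReal.ofNat_ne_top,
    eLpNorm_eq_lintegral_rpow_enorm_toReal two_ne_zero ENNReal.ofNat_ne_top] at hle
  simp only [ENNReal.toReal_ofNat] at hle
  exact (ENNReal.rpow_le_rpow_iff (by norm_num : (0:ℝ) < 1/2)).1 hle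

end Condexp

section BaryProj

variable {π : Measure (H × H)} {μ ν : Measure H}

lemma firstCoord_le : firstCoord H ≤ (inferInstance : MeasurableSpace (H × H)) :=
  measurable_fst.comap_le

lemma integral_baryProj (h : IsCoupling π μ ν) (h2ν : Integrable (fun x => ‖x‖ ^ 2) ν) :
    ∫ p, baryProj π p ∂π = mea ν := by
  haveI := h.1
  rw [baryProj, integral_condExp firstCoord_le]
  exact h.int_snd (f := fun x : H => x) aestronglyMeasurable_id

lemma baryProj_dirac (ν : Measure H) [IsProbabilityMeasure ν]
    (h2ν : Integrable (fun x => ‖x‖ ^ 2) ν) (z : H) :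
    baryProj (ν.map (fun y => (z, y))) =ᵐ[ν.map (fun y => (z, y))] fun _ => mea ν := by
  set π := ν.map (fun y => (z, y)) with hπ
  have hmeas : Measurable (fun y : H => (z, y)) := measurable_const.prodMk measurable_id
  haveI : IsProbabilityMeasure π := Measure.isProbabilityMeasure_map hmeas.aemeasurable
  have hint : Integrable (fun p : H × H => p.2) π := by
    rw [hπ]
    exact (integrable_map_measure measurable_snd.aestronglyMeasurable
      hmeas.aemeasurable).2 (integrable_id' h2ν)
  refine (ae_eq_condExp_of_forall_setIntegral_eq firstCoord_le hint
    (fun s _ _ => (integrable_const _).integrableOn)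
    (fun s hs hμs => ?_)
    (StronglyMeasurable.aestronglyMeasurable stronglyMeasurable_const)).symm
  obtain ⟨A, hA, rfl⟩ := hs
  have hsA : MeasurableSet (Prod.fst ⁻¹' A : Set (H × H)) := measurable_fst hA
  rw [setIntegral_const, hπ,
    setIntegral_map hsA measurable_snd.aestronglyMeasurable hmeas.aemeasurable,
    map_measureReal_apply hmeas hsA]
  by_cases hz : z ∈ A
  · have hpre : (fun y : H => (z, y)) ⁻¹' (Prod.fst ⁻¹' A) = Set.univ := by
      ext y; simp [hz]
    rw [hpre]
    simp [mea]
  · have hpre : (fun y : H => (z, y)) ⁻¹' (Prod.fst ⁻¹' A) = ∅ := by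
      ext y; simp [hz]
    rw [hpre]
    simp

lemma weakCost_dirac_le (ν : Measure H) [IsProbabilityMeasure ν]
    (h2ν : Integrable (fun x => ‖x‖ ^ 2) ν) (z : H) :
    weakCost (Measure.dirac z) ν ≤ ‖z - mea ν‖ ^ 2 := by
  set π := ν.map (fun y => (z, y)) with hπ
  have hmeas : Measurable (fun y : H => (z, y)) := measurable_const.prodMk measurable_id
  haveI : IsProbabilityMeasure π := Measure.isProbabilityMeasure_map hmeas.aemeasurable
  have hcoup : IsCoupling π (Measure.dirac z) ν := by
    refine ⟨inferInstance, ?_, ?_⟩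
    · rw [hπ, Measure.map_map measurable_fst hmeas]
      have h1 : (Prod.fst ∘ fun y : H => (z, y)) = fun _ => z := rfl
      rw [h1, Measure.map_const]
      simp
    · rw [hπ, Measure.map_map measurable_snd hmeas]
      have h1 : (Prod.snd ∘ fun y : H => (z, y)) = id := rfl
      rw [h1, Measure.map_id]
  refine (weakCost_le_cost hcoup).trans ?_
  have hae := baryProj_dirac ν h2ν z
  have he : ∫ p, ‖p.1 - baryProj π p‖ ^ 2 ∂π = ∫ p, ‖p.1 - mea ν‖ ^ 2 ∂π :=
    integral_congr_ae (hae.mono fun p hp => by simp only [hπ, hp])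
  rw [he, hπ, integral_map (f := fun p : H × H => ‖p.1 - mea ν‖ ^ 2) hmeas.aemeasurable
    (((continuous_fst.sub continuous_const).norm.pow 2).aestronglyMeasurable)]
  simp

/-- Lower bound on the barycentric cost of any coupling. -/
lemma weak_cost_lower (h : IsCoupling π μ ν)
    (h2μ : Integrable (fun x => ‖x‖ ^ 2) μ) (h2ν : Integrable (fun x => ‖x‖ ^ 2) ν) :
    (max (Real.sqrt (va μ) - Real.sqrt (va ν)) 0) ^ 2 + ‖mea μ - mea ν‖ ^ 2
      ≤ ∫ p, ‖p.1 - baryProj π p‖ ^ 2 ∂π := by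
  haveI := h.1
  set S := baryProj π with hS
  have hsnd2 : MemLp (fun p : H × H => p.2) 2 π := h.memLp2_snd h2ν
  have hfst2 : MemLp (fun p : H × H => p.1) 2 π := h.memLp2_fst h2μ
  have hS2 : MemLp S 2 π := memLp2_condexp firstCoord_le hsnd2
  have hSint : ∫ p, S p ∂π = mea ν := integral_baryProj h h2ν
  have hu : MemLp (fun p : H × H => p.1 - mea μ) 2 π := hfst2.sub (memLp_const _)
  have hv : MemLp (fun p : H × H => S p - mea ν) 2 π := hS2.sub (memLp_const _)
  have key : ∀ p : H × H, p.1 - S p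
      = ((p.1 - mea μ) - (S p - mea ν)) + (mea μ - mea ν) := fun p => by abel
  have hcost : ∫ p, ‖p.1 - S p‖ ^ 2 ∂π
      = ∫ p, ‖(p.1 - mea μ) - (S p - mea ν)‖ ^ 2 ∂π + ‖mea μ - mea ν‖ ^ 2 := by
    simp_rw [key]
    rw [integral_norm_add_const_sq (u := fun p : H × H => (p.1 - mea μ) - (S p - mea ν))
      (hu.sub hv) (mea μ - mea ν)]
    have hzero : ∫ p, ((p.1 - mea μ) - (S p - mea ν)) ∂π = 0 := by
      rw [integral_sub (f := fun p : H × H => p.1 - mea μ)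
        (g := fun p : H × H => S p - mea ν) (integrable_of_memLp2 hu) (integrable_of_memLp2 hv),
        integral_sub (f := fun p : H × H => p.1) (g := fun _ => mea μ)
          (integrable_of_memLp2 hfst2) (integrable_const _),
        integral_sub (f := fun p : H × H => S p) (g := fun _ => mea ν)
          (integrable_of_memLp2 hS2) (integrable_const _),
        integral_const, integral_const, hSint]
      have h' := h.int_fst (f := fun x : H => x) aestronglyMeasurable_id
      rw [h']
      simp [mea]
    rw [hzero, inner_zero_left]
    ring
  have hA : ∫ p, ‖p.1 - mea μ‖ ^ 2 ∂π = va μ :=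
    h.int_fst (f := fun x => ‖x - mea μ‖ ^ 2)
      (((continuous_id.sub continuous_const).norm.pow 2).aestronglyMeasurable)
  set B := ∫ p, ‖S p - mea ν‖ ^ 2 ∂π with hB
  have hBnn : 0 ≤ B := integral_nonneg fun p => by positivity
  have hBle : B ≤ va ν := by
    have hcc : π[fun _ : H × H => mea ν|firstCoord H] = fun _ => mea ν :=
      condExp_const firstCoord_le (mea ν)
    have hc := condExp_sub (μ := π) (m := firstCoord H)
      (f := fun p : H × H => p.2) (g := fun _ : H × H => mea ν)
      (integrable_of_memLp2 hsnd2) (integrable_const _)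
    have hsub : π[fun p : H × H => p.2 - mea ν|firstCoord H] =ᵐ[π] fun p => S p - mea ν := by
      refine hc.trans ?_
      rw [hcc]
      exact Filter.Eventually.of_forall fun p => rfl
    have h1 : B = ∫ p, ‖(π[fun p : H × H => p.2 - mea ν|firstCoord H]) p‖ ^ 2 ∂π :=
      integral_congr_ae (hsub.symm.mono fun p hp => by simp only [hp])
    have h2 := integral_sq_condexp_le firstCoord_le
      ((hsnd2.sub (memLp_const (mea ν))) : MemLp (fun p : H × H => p.2 - mea ν) 2 π)
    have h3 : ∫ p, ‖p.2 - mea ν‖ ^ 2 ∂π = va ν :=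
      h.int_snd (f := fun x => ‖x - mea ν‖ ^ 2)
        (((continuous_id.sub continuous_const).norm.pow 2).aestronglyMeasurable)
    rw [h1]
    exact h2.trans (le_of_eq h3)
  have hCS : ∫ p, ⟪p.1 - mea μ, S p - mea ν⟫ ∂π ≤ Real.sqrt (va μ) * Real.sqrt B := by
    have hcs := integral_inner_le_sqrt hu hv
    rwa [hA] at hcs
  have hexp : ∫ p, ‖(p.1 - mea μ) - (S p - mea ν)‖ ^ 2 ∂π
      = va μ - 2 * ∫ p, ⟪p.1 - mea μ, S p - mea ν⟫ ∂π + B := by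
    rw [integral_norm_sub_sq hu hv, hA]
  have ha2 := Real.sq_sqrt (va_nonneg μ)
  have hb2 := Real.sq_sqrt hBnn
  have hbc : Real.sqrt B ≤ Real.sqrt (va ν) := Real.sqrt_le_sqrt hBle
  set a := Real.sqrt (va μ) with hadef
  set b := Real.sqrt B with hbdef
  set c := Real.sqrt (va ν) with hcdef
  have hmax : (max (a - c) 0) ^ 2 ≤ (a - b) ^ 2 := by
    rcases le_total (a - c) 0 with h0 | h0
    · rw [max_eq_right h0]
      simpa using sq_nonneg (a - b)
    · rw [max_eq_left h0]
      exact pow_le_pow_left₀ h0 (by linarith) 2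
  have h1 : (a - b) ^ 2 ≤ ∫ p, ‖(p.1 - mea μ) - (S p - mea ν)‖ ^ 2 ∂π := by
    nlinarith [hCS, hexp, ha2, hb2]
  rw [hcost]
  linarith [hmax, h1]

end BaryProj

end WB

end Chunk3

noncomputable section Chunk4

open scoped RealInnerProductSpace

variable {H : Type*} [NormedAddCommGroup H] [InnerProductSpace ℝ H] [CompleteSpace H]
  [MeasurableSpace H] [BorelSpace H] [SecondCountableTopology H]

namespace WB

lemma va_eq (ν : Measure H) [IsProbabilityMeasure ν] (h2 : Integrable (fun x => ‖x‖ ^ 2) ν) :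
    va ν = (∫ x, ‖x‖ ^ 2 ∂ν) - ‖mea ν‖ ^ 2 := by
  rw [va, integral_norm_sub_sq (u := fun x : H => x) (v := fun _ => mea ν)
    (memLp2 h2) (memLp_const _)]
  have hi : ∫ x, ⟪x, mea ν⟫ ∂ν = ‖mea ν‖ ^ 2 := by
    calc ∫ x, ⟪x, mea ν⟫ ∂ν = ∫ x, ⟪mea ν, x⟫ ∂ν :=
          integral_congr_ae (Filter.Eventually.of_forall fun x => real_inner_comm _ _)
      _ = ⟪mea ν, ∫ x, x ∂ν⟫ := integral_inner (integrable_id' h2) _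
      _ = ‖mea ν‖ ^ 2 := real_inner_self_eq_norm_sq _
  rw [hi, integral_const]
  simp only [probReal_univ, measure_univ, ENNReal.toReal_one, one_smul, smul_eq_mul, one_mul]
  ring

lemma integrable_sq_dirac (z : H) : Integrable (fun x : H => ‖x‖ ^ 2) (Measure.dirac z) := by
  have hmeas : Measurable fun x : H => ‖x‖ ^ 2 := measurable_id.norm.pow_const 2
  exact (integrable_const (‖z‖ ^ 2)).congr (ae_eq_dirac' hmeas).symm

lemma sum_norm_sub_sq {n : ℕ} (lam : Fin n → ℝ) (hsum : ∑ i, lam i = 1)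
    (mi : Fin n → H) (x : H) :
    ∑ i, lam i * ‖x - mi i‖ ^ 2
      = ‖x - ∑ j, lam j • mi j‖ ^ 2 + ∑ i, lam i * ‖(∑ j, lam j • mi j) - mi i‖ ^ 2 := by
  set m := ∑ j, lam j • mi j with hm
  have key : ∀ i, lam i * ‖x - mi i‖ ^ 2
      = lam i * ‖x - m‖ ^ 2 + 2 * ⟪x - m, lam i • (m - mi i)⟫ + lam i * ‖m - mi i‖ ^ 2 := by
    intro i
    have h1 : x - mi i = (x - m) + (m - mi i) := by abel
    rw [h1, norm_add_sq_real, real_inner_smul_right]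
    ring
  simp_rw [key]
  rw [Finset.sum_add_distrib, Finset.sum_add_distrib]
  have e1 : ∑ i : Fin n, lam i * ‖x - m‖ ^ 2 = ‖x - m‖ ^ 2 := by
    rw [← Finset.sum_mul, hsum, one_mul]
  have e2 : ∑ i : Fin n, 2 * ⟪x - m, lam i • (m - mi i)⟫ = 0 := by
    rw [← Finset.mul_sum, ← inner_sum]
    have h0 : ∑ i : Fin n, lam i • (m - mi i) = 0 := by
      simp_rw [smul_sub]
      rw [Finset.sum_sub_distrib, ← Finset.sum_smul, hsum, one_smul, hm]
      simp
    rw [h0, inner_zero_right, mul_zero]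
  rw [e1, e2]
  ring

lemma sum_sqrt_le {n : ℕ} (lam : Fin n → ℝ) (hlam : ∀ i, 0 ≤ lam i)
    (hsum : ∑ i, lam i = 1) (v : Fin n → ℝ) (hv : ∀ i, 0 ≤ v i) :
    (∑ i, lam i * Real.sqrt (v i)) ^ 2 ≤ ∑ i, lam i * v i := by
  have key := Finset.sum_mul_sq_le_sq_mul_sq Finset.univ (fun i => Real.sqrt (lam i))
    (fun i => Real.sqrt (lam i) * Real.sqrt (v i))
  have e1 : ∀ i : Fin n, Real.sqrt (lam i) * (Real.sqrt (lam i) * Real.sqrt (v i))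
      = lam i * Real.sqrt (v i) := fun i => by
    rw [← mul_assoc, Real.mul_self_sqrt (hlam i)]
  have e2 : ∀ i : Fin n, (Real.sqrt (lam i)) ^ 2 = lam i := fun i => Real.sq_sqrt (hlam i)
  have e3 : ∀ i : Fin n, (Real.sqrt (lam i) * Real.sqrt (v i)) ^ 2 = lam i * v i := fun i => by
    rw [mul_pow, Real.sq_sqrt (hlam i), Real.sq_sqrt (hv i)]
  simp_rw [e1, e2, e3, hsum, one_mul] at key
  exact key

end WB

end Chunk4

example {d : ℕ} : SecondCountableTopology (EuclideanSpace ℝ (Fin d)) := inferInstance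
example {d : ℕ} : BorelSpace (EuclideanSpace ℝ (Fin d)) := inferInstance


/-- distance bound between weak and Wasserstein barycenters:
`W₂²(μ̄, μ̃) ≤ 2 ∑ λᵢ (E‖Yᵢ‖² - ‖E Yᵢ‖²)` for a.c. `νᵢ`, one of which has bounded density. -/
theorem weak_vs_wasserstein_barycenter {d : ℕ} {n : ℕ}
    (lam : Fin n → ℝ) (hlam : ∀ i, 0 ≤ lam i) (hsum : ∑ i, lam i = 1)
    (ν : Fin n → Measure (EuclideanSpace ℝ (Fin d)))
    (hν : ∀ i, IsProbabilityMeasure (ν i))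
    (hν2 : ∀ i, Integrable (fun y => ‖y‖ ^ 2) (ν i))
    (hac : ∀ i, ν i ≪ MeasureTheory.volume)
    (hbdd : ∃ i, ∃ C : ℝ≥0∞, ∀ᵐ x ∂(MeasureTheory.volume : Measure (EuclideanSpace ℝ (Fin d))),
      (ν i).rnDeriv MeasureTheory.volume x ≤ C)
    (μw μt : Measure (EuclideanSpace ℝ (Fin d)))
    (hμw : IsWeakBarycenter lam ν μw) (hμt : IsW2Barycenter lam ν μt) :
    W2sq μw μt ≤ 2 * ∑ i, lam i * ((∫ y, ‖y‖ ^ 2 ∂(ν i)) - ‖∫ y, y ∂(ν i)‖ ^ 2) := by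

  classical
  obtain ⟨hμw1, hμw2, hμwmin⟩ := hμw
  obtain ⟨hμt1, hμt2, hμtmin⟩ := hμt
  haveI := hμw1
  haveI := hμt1
  haveI : ∀ i, IsProbabilityMeasure (ν i) := hν
  set m := ∑ i, lam i • WB.mea (ν i) with hmdef
  set A := ∑ i, lam i * Real.sqrt (WB.va (ν i)) with hAdef
  set V := ∑ i, lam i * WB.va (ν i) with hVdef
  have hAnn : 0 ≤ A := Finset.sum_nonneg fun i _ => mul_nonneg (hlam i) (Real.sqrt_nonneg _)
  have hA2V : A ^ 2 ≤ V := WB.sum_sqrt_le lam hlam hsum _ (fun i => WB.va_nonneg _)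
  have hVnn : 0 ≤ V := Finset.sum_nonneg fun i _ => mul_nonneg (hlam i) (WB.va_nonneg _)
  -- ===== weak side =====
  have hweak : WB.mea μw = m ∧ WB.va μw ≤ V := by
    have hlow : ∀ i, (max (Real.sqrt (WB.va μw) - Real.sqrt (WB.va (ν i))) 0) ^ 2
        + ‖WB.mea μw - WB.mea (ν i)‖ ^ 2 ≤ weakCost μw (ν i) := fun i =>
      WB.le_weakCost (fun π hπ => WB.weak_cost_lower hπ hμw2 (hν2 i))
    have hup : ∀ i, weakCost (Measure.dirac m) (ν i) ≤ ‖m - WB.mea (ν i)‖ ^ 2 := fun i =>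
      WB.weakCost_dirac_le (ν i) (hν2 i) m
    have hmin := hμwmin (Measure.dirac m) inferInstance (WB.integrable_sq_dirac m)
    have hchain : ∑ i, lam i * ((max (Real.sqrt (WB.va μw) - Real.sqrt (WB.va (ν i))) 0) ^ 2
        + ‖WB.mea μw - WB.mea (ν i)‖ ^ 2) ≤ ∑ i, lam i * ‖m - WB.mea (ν i)‖ ^ 2 := by
      calc ∑ i, lam i * ((max (Real.sqrt (WB.va μw) - Real.sqrt (WB.va (ν i))) 0) ^ 2
            + ‖WB.mea μw - WB.mea (ν i)‖ ^ 2)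
          ≤ ∑ i, lam i * weakCost μw (ν i) :=
            Finset.sum_le_sum fun i _ => mul_le_mul_of_nonneg_left (hlow i) (hlam i)
        _ ≤ ∑ i, lam i * weakCost (Measure.dirac m) (ν i) := hmin
        _ ≤ ∑ i, lam i * ‖m - WB.mea (ν i)‖ ^ 2 :=
            Finset.sum_le_sum fun i _ => mul_le_mul_of_nonneg_left (hup i) (hlam i)
    have hsplit : ∑ i, lam i * ((max (Real.sqrt (WB.va μw) - Real.sqrt (WB.va (ν i))) 0) ^ 2
        + ‖WB.mea μw - WB.mea (ν i)‖ ^ 2)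
        = (∑ i, lam i * (max (Real.sqrt (WB.va μw) - Real.sqrt (WB.va (ν i))) 0) ^ 2)
          + ∑ i, lam i * ‖WB.mea μw - WB.mea (ν i)‖ ^ 2 := by
      rw [← Finset.sum_add_distrib]
      exact Finset.sum_congr rfl fun i _ => by ring
    have hid := WB.sum_norm_sub_sq lam hsum (fun i => WB.mea (ν i)) (WB.mea μw)
    rw [hsplit, hid] at hchain
    have hTnn : 0 ≤ ∑ i, lam i *
        (max (Real.sqrt (WB.va μw) - Real.sqrt (WB.va (ν i))) 0) ^ 2 :=
      Finset.sum_nonneg fun i _ => mul_nonneg (hlam i) (sq_nonneg _)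
    have hmean : WB.mea μw = m := by
      have h0 : ‖WB.mea μw - m‖ ^ 2 ≤ 0 := by rw [hmdef]; linarith [hchain, hTnn]
      have h1 : ‖WB.mea μw - m‖ = 0 := by nlinarith [norm_nonneg (WB.mea μw - m)]
      rwa [norm_eq_zero, sub_eq_zero] at h1
    have hsum0 : ∑ i, lam i *
        (max (Real.sqrt (WB.va μw) - Real.sqrt (WB.va (ν i))) 0) ^ 2 = 0 := by
      have h0 : ‖WB.mea μw - ∑ j, lam j • WB.mea (ν j)‖ ^ 2 ≥ 0 := sq_nonneg _
      exact le_antisymm (by linarith [hchain]) hTnn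
    have heach := (Finset.sum_eq_zero_iff_of_nonneg
      (fun i _ => mul_nonneg (hlam i) (sq_nonneg _))).1 hsum0
    have hva : WB.va μw ≤ V := by
      have hper : ∀ i, lam i * WB.va μw ≤ lam i * WB.va (ν i) := by
        intro i
        rcases eq_or_lt_of_le (hlam i) with h0 | h0
        · rw [← h0]; simp
        · have h1 := heach i (Finset.mem_univ i)
          have h2 : (max (Real.sqrt (WB.va μw) - Real.sqrt (WB.va (ν i))) 0) ^ 2 = 0 := by
            rcases mul_eq_zero.1 h1 with h | h
            · exact absurd h h0.ne'
            · exact h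
          have h3 : Real.sqrt (WB.va μw) ≤ Real.sqrt (WB.va (ν i)) := by
            have h4 : max (Real.sqrt (WB.va μw) - Real.sqrt (WB.va (ν i))) 0 = 0 :=
              pow_eq_zero_iff two_ne_zero |>.1 h2
            have h5 := le_max_left (Real.sqrt (WB.va μw) - Real.sqrt (WB.va (ν i))) 0
            rw [h4] at h5
            linarith
          have h4 : WB.va μw ≤ WB.va (ν i) := by
            nlinarith [Real.sq_sqrt (WB.va_nonneg μw), Real.sq_sqrt (WB.va_nonneg (ν i)),
              Real.sqrt_nonneg (WB.va μw), Real.sqrt_nonneg (WB.va (ν i))]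
          exact mul_le_mul_of_nonneg_left h4 (hlam i)
      calc WB.va μw = ∑ i, lam i * WB.va μw := by rw [← Finset.sum_mul, hsum, one_mul]
        _ ≤ V := Finset.sum_le_sum fun i _ => hper i
    exact ⟨hmean, hva⟩
  -- ===== W2 side : master inequality =====
  have master : ∀ ε : ℝ, 0 < ε → ∀ z : EuclideanSpace ℝ (Fin d), ∀ t : ℝ, ∃ C : ℝ,
      C ≤ Real.sqrt (WB.va μt) * A ∧
      WB.va μt - 2 * C + ∑ i, lam i * ‖WB.mea μt - WB.mea (ν i)‖ ^ 2
        ≤ t ^ 2 * WB.va μt - 2 * t * C + (∑ i, lam i * ‖z - WB.mea (ν i)‖ ^ 2) + ε := by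
    intro ε hε z t
    have hch : ∀ i : Fin n, ∃ π, IsCoupling π μt (ν i) ∧
        ∫ p, ‖p.1 - p.2‖ ^ 2 ∂π < W2sq μt (ν i) + ε := fun i =>
      WB.W2_exists_coupling μt (ν i) hε
    choose π hπ hπlt using hch
    set C : Fin n → ℝ :=
      fun i => ∫ p, ⟪p.1 - WB.mea μt, p.2 - WB.mea (ν i)⟫ ∂(π i) with hCdef
    refine ⟨∑ i, lam i * C i, ?_, ?_⟩
    · calc ∑ i, lam i * C i
          ≤ ∑ i, lam i * (Real.sqrt (WB.va μt) * Real.sqrt (WB.va (ν i))) :=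
            Finset.sum_le_sum fun i _ =>
              mul_le_mul_of_nonneg_left (WB.Cpi_le (hπ i) hμt2 (hν2 i)) (hlam i)
        _ = Real.sqrt (WB.va μt) * A := by
            rw [hAdef, Finset.mul_sum]
            exact Finset.sum_congr rfl fun i _ => by ring
    · have hφm : Measurable (fun x : EuclideanSpace ℝ (Fin d) => z + t • (x - WB.mea μt)) :=
        measurable_const.add ((measurable_id.sub_const _).const_smul t)
      have hφLp : MemLp (fun x : EuclideanSpace ℝ (Fin d) => z + t • (x - WB.mea μt)) 2 μt :=
        (memLp_const z).add (((WB.memLp2 hμt2).sub (memLp_const _)).const_smul t)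
      set ρ := μt.map (fun x => z + t • (x - WB.mea μt)) with hρdef
      haveI : IsProbabilityMeasure ρ := Measure.isProbabilityMeasure_map hφm.aemeasurable
      have hρ2 : Integrable (fun x => ‖x‖ ^ 2) ρ :=
        WB.sq_int_of_memLp2
          ((memLp_map_measure_iff aestronglyMeasurable_id hφm.aemeasurable).2 hφLp)
      have hcost : ∀ i, W2sq ρ (ν i)
          ≤ t ^ 2 * WB.va μt - 2 * t * C i + WB.va (ν i) + ‖z - WB.mea (ν i)‖ ^ 2 := by
        intro i
        have hc2 := (hπ i).map_first hφm
        have h1 := WB.W2sq_le_cost hc2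
        have heq : ∫ p, ‖p.1 - p.2‖ ^ 2
              ∂((π i).map (fun p => ((z + t • (p.1 - WB.mea μt)), p.2)))
            = ∫ p, ‖(z + t • (p.1 - WB.mea μt)) - p.2‖ ^ 2 ∂(π i) :=
          integral_map ((hφm.comp measurable_fst).prodMk measurable_snd).aemeasurable
            (((continuous_fst.sub continuous_snd).norm.pow 2).aestronglyMeasurable)
        rw [heq, WB.cost_affine (hπ i) hμt2 (hν2 i) z t] at h1
        exact h1
      have hlowW : ∀ i, WB.va μt - 2 * C i + WB.va (ν i) + ‖WB.mea μt - WB.mea (ν i)‖ ^ 2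
          < W2sq μt (ν i) + ε := by
        intro i
        have hca := WB.cost_affine (hπ i) hμt2 (hν2 i) (WB.mea μt) 1
        have he : ∫ p, ‖(WB.mea μt + (1:ℝ) • (p.1 - WB.mea μt)) - p.2‖ ^ 2 ∂(π i)
            = ∫ p, ‖p.1 - p.2‖ ^ 2 ∂(π i) :=
          integral_congr_ae (Filter.Eventually.of_forall fun p => by simp)
        rw [he] at hca
        have h2 := hπlt i
        rw [hca] at h2
        nlinarith [h2]
      have hminW := hμtmin ρ inferInstance hρ2
      have sumexp : ∀ (s c : ℝ) (y : EuclideanSpace ℝ (Fin d)),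
          ∑ i, lam i * (s - 2 * c * C i + WB.va (ν i) + ‖y - WB.mea (ν i)‖ ^ 2)
            = s - 2 * c * (∑ i, lam i * C i) + V + ∑ i, lam i * ‖y - WB.mea (ν i)‖ ^ 2 := by
        intro s c y
        have h1 : ∀ i : Fin n, lam i * (s - 2 * c * C i + WB.va (ν i) + ‖y - WB.mea (ν i)‖ ^ 2)
            = lam i * s - 2 * c * (lam i * C i) + lam i * WB.va (ν i)
              + lam i * ‖y - WB.mea (ν i)‖ ^ 2 := fun i => by ring
        simp_rw [h1]
        rw [Finset.sum_add_distrib, Finset.sum_add_distrib, Finset.sum_sub_distrib,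
          ← Finset.sum_mul, hsum, one_mul, ← Finset.mul_sum, hVdef]
      have hL : ∑ i, lam i * (WB.va μt - 2 * 1 * C i + WB.va (ν i)
            + ‖WB.mea μt - WB.mea (ν i)‖ ^ 2)
          ≤ ∑ i, lam i * (W2sq μt (ν i) + ε) :=
        Finset.sum_le_sum fun i _ => mul_le_mul_of_nonneg_left (by
          have := hlowW i; linarith [this]) (hlam i)
      have hR : ∑ i, lam i * W2sq ρ (ν i)
          ≤ ∑ i, lam i * (t ^ 2 * WB.va μt - 2 * t * C i + WB.va (ν i)
            + ‖z - WB.mea (ν i)‖ ^ 2) :=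
        Finset.sum_le_sum fun i _ => mul_le_mul_of_nonneg_left (hcost i) (hlam i)
      have hLe : ∑ i, lam i * (W2sq μt (ν i) + ε) = (∑ i, lam i * W2sq μt (ν i)) + ε := by
        simp_rw [mul_add]
        rw [Finset.sum_add_distrib, ← Finset.sum_mul, hsum, one_mul]
      rw [sumexp (WB.va μt) 1 (WB.mea μt), hLe] at hL
      rw [sumexp (t ^ 2 * WB.va μt) t z] at hR
      have := hminW
      nlinarith [hL, hR, this]
  -- mean of μt
  have hmtm : WB.mea μt = m := by
    have key : ∀ ε : ℝ, 0 < ε → ‖WB.mea μt - m‖ ^ 2 ≤ 0 + ε := by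
      intro ε hε
      obtain ⟨C, hC, hineq⟩ := master ε hε m 1
      have hidt := WB.sum_norm_sub_sq lam hsum (fun i => WB.mea (ν i)) (WB.mea μt)
      rw [← hmdef] at hidt
      linarith [hineq, hidt]
    have h0 : ‖WB.mea μt - m‖ ^ 2 ≤ 0 := le_of_forall_pos_le_add key
    have h1 : ‖WB.mea μt - m‖ = 0 := by nlinarith [norm_nonneg (WB.mea μt - m)]
    rwa [norm_eq_zero, sub_eq_zero] at h1
  -- variance of μt
  have hvat : WB.va μt ≤ A ^ 2 := by
    have key : ∀ δ : ℝ, 0 < δ →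
        2 * WB.va μt ≤ 2 * (Real.sqrt (WB.va μt) * A) + δ := by
      intro δ hδ
      have hva0 := WB.va_nonneg μt
      have hden : (0:ℝ) < 1 + WB.va μt := by linarith
      set s := min 1 (δ / (1 + WB.va μt)) with hsdef
      have hspos : 0 < s := lt_min one_pos (div_pos hδ hden)
      have hs1 : s ≤ 1 := min_le_left _ _
      obtain ⟨C, hC, hineq⟩ := master (s ^ 2) (by positivity) (WB.mea μt) (1 - s)
      have h2 : s * ((2 - s) * WB.va μt) ≤ s * (2 * C + s) := by nlinarith [hineq]
      have h3 : (2 - s) * WB.va μt ≤ 2 * C + s := le_of_mul_le_mul_left h2 hspos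
      have hsd : s * (1 + WB.va μt) ≤ δ := by
        have hmr := min_le_right 1 (δ / (1 + WB.va μt))
        calc s * (1 + WB.va μt) ≤ (δ / (1 + WB.va μt)) * (1 + WB.va μt) :=
              mul_le_mul_of_nonneg_right hmr (by linarith)
          _ = δ := div_mul_cancel₀ δ hden.ne'
      nlinarith [h3, hC, hsd, hspos.le, hs1]
    have h2 : 2 * WB.va μt ≤ 2 * (Real.sqrt (WB.va μt) * A) :=
      le_of_forall_pos_le_add key
    nlinarith [Real.sq_sqrt (WB.va_nonneg μt), Real.sqrt_nonneg (WB.va μt),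
      sq_nonneg (Real.sqrt (WB.va μt) - A)]
  -- ===== final assembly =====
  have hprod := WB.isCoupling_prod μw μt
  have hfin : W2sq μw μt ≤ WB.va μw + WB.va μt := by
    have h1 := WB.W2sq_le_cost hprod
    have hca := WB.cost_affine hprod hμw2 hμt2 (WB.mea μw) 1
    have he : ∫ p, ‖(WB.mea μw + (1:ℝ) • (p.1 - WB.mea μw)) - p.2‖ ^ 2 ∂(μw.prod μt)
        = ∫ p, ‖p.1 - p.2‖ ^ 2 ∂(μw.prod μt) :=
      integral_congr_ae (Filter.Eventually.of_forall fun p => by simp)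
    rw [he, WB.Cprod_zero μw μt hμw2 hμt2] at hca
    rw [hca] at h1
    have hmm : WB.mea μw - WB.mea μt = 0 := by rw [hweak.1, hmtm, sub_self]
    rw [hmm] at h1
    simp at h1
    nlinarith [h1]
  have hRHS : ∑ i, lam i * ((∫ y, ‖y‖ ^ 2 ∂(ν i)) - ‖∫ y, y ∂(ν i)‖ ^ 2) = V := by
    rw [hVdef]
    exact Finset.sum_congr rfl fun i _ => by rw [WB.va_eq (ν i) (hν2 i)]; rfl
  rw [hRHS]
  linarith [hfin, hweak.2, hvat, hA2V]
end

section
/- Uniform integrability of second moments under optimal barycentric projections: fix ν ∈ P₂(ℝ^d) and let (ρ_m) be any sequence in P₂(ℝ^d); for each m let S_m be the barycentric projection of the optimal weak coupling between ρ_m and ν. Then for all M, K ≥ 0, sup_m ∫_{‖x‖² ≥ M} ‖x‖² d(S_m#ρ_m)(x) ≤ ∫_{‖x‖² ≥ K} ‖x‖² dν(x) + (K/M) ∫ ‖x‖² dν(x); hence (S_m#ρ_m)_m has uniformly integrable second moments. -/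
open MeasureTheory
open scoped ENNReal

section Aux

variable {α : Type*} {m : MeasurableSpace α} [mα : MeasurableSpace α] {μ : Measure α}

/-- Conditional expectation commutes with continuous linear functionals. -/
theorem aux_condexp_clm (hm : m ≤ mα) [SigmaFinite (μ.trim hm)]
    {E : Type*} [NormedAddCommGroup E] [NormedSpace ℝ E] [CompleteSpace E]
    (φ : E →L[ℝ] ℝ) {f : α → E} (hf : Integrable f μ) :
    μ[fun x => φ (f x)|m] =ᵐ[μ] fun x => φ ((μ[f|m]) x) := by
  refine (ae_eq_condExp_of_forall_setIntegral_eq hm (φ.integrable_comp hf)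
    (fun s _ _ => (φ.integrable_comp integrable_condExp).integrableOn)
    (fun s hs hμs => ?_)
    ⟨fun x => φ ((μ[f|m]) x),
      φ.continuous.comp_stronglyMeasurable stronglyMeasurable_condExp,
      Filter.EventuallyEq.rfl⟩).symm
  rw [φ.integral_comp_comm integrable_condExp.integrableOn,
    setIntegral_condExp hm hf hs, ← φ.integral_comp_comm hf.integrableOn]

/-- Conditional Jensen for the norm (vector-valued). -/
theorem aux_norm_condexp_le (hm : m ≤ mα) [SigmaFinite (μ.trim hm)]
    {E : Type*} [NormedAddCommGroup E] [NormedSpace ℝ E] [CompleteSpace E]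
    {f : α → E} (hf : Integrable f μ) :
    ∀ᵐ x ∂μ, ‖(μ[f|m]) x‖ ≤ (μ[fun x => ‖f x‖|m]) x := by
  obtain ⟨D, hDc, hDsub⟩ :=
    (stronglyMeasurable_condExp (μ := μ) (f := f) (m := m)).isSeparable_range
  haveI : Countable D := hDc.to_subtype
  have hφ : ∀ d : D, ∃ φ : E →L[ℝ] ℝ, ‖φ‖ ≤ 1 ∧ φ d = ‖(d : E)‖ := fun d =>
    exists_dual_vector'' ℝ (d : E)
  choose φ hφ1 hφ2 using hφ
  have key : ∀ d : D, ∀ᵐ x ∂μ, φ d ((μ[f|m]) x) ≤ (μ[fun x => ‖f x‖|m]) x := by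
    intro d
    have h1 := aux_condexp_clm hm (φ d) hf
    have h2 : μ[fun x => φ d (f x)|m] ≤ᵐ[μ] μ[fun x => ‖f x‖|m] := by
      refine condExp_mono ((φ d).integrable_comp hf) hf.norm
        (Filter.Eventually.of_forall fun x => ?_)
      have h3 : ‖(φ d) (f x)‖ ≤ ‖φ d‖ * ‖f x‖ := (φ d).le_opNorm (f x)
      rw [Real.norm_eq_abs] at h3
      nlinarith [le_abs_self ((φ d) (f x)), norm_nonneg (f x), hφ1 d]
    filter_upwards [h1, h2] with x hx h2x
    rw [hx] at h2x
    exact h2x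
  filter_upwards [ae_all_iff.mpr key] with x hx
  by_contra hcon
  push_neg at hcon
  set c := (μ[fun x => ‖f x‖|m]) x with hc
  set gx := (μ[f|m]) x with hgx
  have hε : (0 : ℝ) < (‖gx‖ - c) / 2 := by linarith
  have hmem : gx ∈ closure D := hDsub (Set.mem_range_self x)
  obtain ⟨d, hdD, hd⟩ := Metric.mem_closure_iff.mp hmem _ hε
  have h1 := hx ⟨d, hdD⟩
  have e1 : ‖gx‖ - ‖d‖ ≤ ‖gx - d‖ := norm_sub_norm_le _ _
  have e3 : ‖gx - d‖ < (‖gx‖ - c) / 2 := by rwa [← dist_eq_norm]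
  have e4 : (φ ⟨d, hdD⟩) d - (φ ⟨d, hdD⟩) gx ≤ ‖gx - d‖ := by
    have h5 : ‖(φ ⟨d, hdD⟩) (d - gx)‖ ≤ ‖φ ⟨d, hdD⟩‖ * ‖d - gx‖ :=
      (φ ⟨d, hdD⟩).le_opNorm _
    rw [Real.norm_eq_abs] at h5
    have h6 : (φ ⟨d, hdD⟩) (d - gx) = (φ ⟨d, hdD⟩) d - (φ ⟨d, hdD⟩) gx := map_sub _ _ _
    have h7 : ‖d - gx‖ = ‖gx - d‖ := norm_sub_rev _ _
    nlinarith [le_abs_self ((φ ⟨d, hdD⟩) (d - gx)), norm_nonneg (d - gx),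
      hφ1 ⟨d, hdD⟩]
  have e5 : (φ ⟨d, hdD⟩) d = ‖d‖ := hφ2 ⟨d, hdD⟩
  linarith

/-- Conditional Cauchy–Schwarz for real functions. -/
theorem aux_condexp_sq (hm : m ≤ mα) [SigmaFinite (μ.trim hm)] [IsFiniteMeasure μ]
    {g : α → ℝ} (hg : Integrable g μ) (hg2 : Integrable (fun x => g x ^ 2) μ) :
    ∀ᵐ x ∂μ, (μ[g|m]) x ^ 2 ≤ (μ[fun x => g x ^ 2|m]) x := by
  have key : ∀ q : ℚ, ∀ᵐ x ∂μ,
      2 * (q : ℝ) * (μ[g|m]) x - (q : ℝ) ^ 2 ≤ (μ[fun x => g x ^ 2|m]) x := by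
    intro q
    have hint : Integrable ((2 * (q : ℝ)) • g + fun _ => -(q : ℝ) ^ 2) μ :=
      (hg.smul (2 * (q : ℝ))).add (integrable_const _)
    have h1 : μ[(2 * (q : ℝ)) • g + (fun _ => -(q : ℝ) ^ 2)|m]
        ≤ᵐ[μ] μ[fun x => g x ^ 2|m] := by
      refine condExp_mono hint hg2 (Filter.Eventually.of_forall fun x => ?_)
      simp only [Pi.add_apply, Pi.smul_apply, smul_eq_mul]
      nlinarith [sq_nonneg (g x - (q : ℝ))]
    have h2 : μ[(2 * (q : ℝ)) • g + (fun _ => -(q : ℝ) ^ 2)|m]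
        =ᵐ[μ] fun x => 2 * (q : ℝ) * (μ[g|m]) x - (q : ℝ) ^ 2 := by
      refine (condExp_add (m := m) (hg.smul (2 * (q : ℝ))) (integrable_const _)).trans ?_
      have h3 := condExp_smul (μ := μ) (m := m) (2 * (q : ℝ)) g
      have h4 := condExp_const (μ := μ) hm (-(q : ℝ) ^ 2)
      filter_upwards [h3] with x hx
      simp only [Pi.add_apply, h4, hx, Pi.smul_apply, smul_eq_mul]
      ring
    filter_upwards [h1, h2] with x h1x h2x
    rw [h2x] at h1x
    exact h1x
  filter_upwards [ae_all_iff.mpr key] with x hx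
  by_contra hcon
  push_neg at hcon
  set a := (μ[g|m]) x with ha
  set b := (μ[fun x => g x ^ 2|m]) x with hb
  obtain ⟨q, hq⟩ := exists_rat_near a (show (0 : ℝ) < Real.sqrt (a ^ 2 - b) from
    Real.sqrt_pos.mpr (by linarith))
  have h3 : (a - (q : ℝ)) ^ 2 < a ^ 2 - b := by
    have h4 : |a - (q : ℝ)| ^ 2 < Real.sqrt (a ^ 2 - b) ^ 2 :=
      pow_lt_pow_left₀ hq (abs_nonneg _) two_ne_zero
    rw [Real.sq_sqrt (by linarith : (0 : ℝ) ≤ a ^ 2 - b)] at h4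
    calc (a - (q : ℝ)) ^ 2 = |a - (q : ℝ)| ^ 2 := (sq_abs _).symm
      _ < a ^ 2 - b := h4
  nlinarith [hx q]

end Aux

/-- uniform integrability of second moments under optimal barycentric
projections: with `Sₘ` the barycentric projection of the optimal weak coupling between `ρₘ`
and a fixed `ν`, for all `M > 0` and `K ≥ 0`,
`∫_{‖x‖²≥M} ‖x‖² d(Sₘ#ρₘ) ≤ ∫_{‖x‖²≥K} ‖x‖² dν + (K/M) ∫ ‖x‖² dν`, uniformly in `m`. -/
theorem uniform_integrability_baryProj {E : Type*} [NormedAddCommGroup E] [NormedSpace ℝ E]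
    [CompleteSpace E] [MeasurableSpace E] [BorelSpace E]
    (ν : Measure E) [IsProbabilityMeasure ν] (hν2 : Integrable (fun y => ‖y‖ ^ 2) ν)
    (ρ : ℕ → Measure E) (hρ : ∀ m, IsProbabilityMeasure (ρ m))
    (hρ2 : ∀ m, Integrable (fun x => ‖x‖ ^ 2) (ρ m))
    (S : ℕ → E → E) (hSmeas : ∀ m, Measurable (S m))
    (hSopt : ∀ m, ∃ π : Measure (E × E), IsCoupling π (ρ m) ν ∧
      (fun p => S m p.1) =ᵐ[π] baryProj π ∧
      ∫ x, ‖x - S m x‖ ^ 2 ∂(ρ m) = weakCost (ρ m) ν) :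
    ∀ M K : ℝ, 0 < M → 0 ≤ K → ∀ m,
      ∫ x in {x : E | M ≤ ‖x‖ ^ 2}, ‖x‖ ^ 2 ∂((ρ m).map (S m))
        ≤ (∫ y in {y : E | K ≤ ‖y‖ ^ 2}, ‖y‖ ^ 2 ∂ν) + (K / M) * ∫ y, ‖y‖ ^ 2 ∂ν := by
  intro M K hM hK m
  obtain ⟨π, ⟨hπprob, hfst, hsnd⟩, hae, -⟩ := hSopt m
  haveI := hπprob
  have hm : firstCoord E ≤ (Prod.instMeasurableSpace : MeasurableSpace (E × E)) :=
    measurable_iff_comap_le.mp (measurable_fst : Measurable (Prod.fst : E × E → E))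
  haveI : SigmaFinite (π.trim hm) := inferInstance
  have hsK : MeasurableSet {y : E | K ≤ ‖y‖ ^ 2} :=
    measurableSet_le measurable_const (measurable_norm.pow_const 2)
  have hRHS1 : 0 ≤ ∫ y in {y : E | K ≤ ‖y‖ ^ 2}, ‖y‖ ^ 2 ∂ν :=
    setIntegral_nonneg hsK fun y _ => by positivity
  have hν0 : 0 ≤ ∫ y, ‖y‖ ^ 2 ∂ν := integral_nonneg fun y => by positivity
  have hs : MeasurableSet {x : E | M ≤ ‖x‖ ^ 2} :=
    measurableSet_le measurable_const (measurable_norm.pow_const 2)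
  have hSf : Measurable (fun p : E × E => S m p.1) := (hSmeas m).comp measurable_fst
  have hcont : Continuous (fun x : E => ‖x‖ ^ 2) := continuous_norm.pow 2
  have hmap : (ρ m).map (S m) = π.map (fun p : E × E => S m p.1) := by
    rw [← hfst, Measure.map_map (hSmeas m) measurable_fst]; rfl
  have hLHS : ∫ x in {x : E | M ≤ ‖x‖ ^ 2}, ‖x‖ ^ 2 ∂((ρ m).map (S m))
      = ∫ p, ((fun p : E × E => S m p.1) ⁻¹' {x : E | M ≤ ‖x‖ ^ 2}).indicator
          (fun p : E × E => ‖S m p.1‖ ^ 2) p ∂π := by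
    rw [hmap, setIntegral_map hs hcont.aestronglyMeasurable hSf.aemeasurable,
      ← integral_indicator (hSf hs)]
  by_cases hY : Integrable (fun p : E × E => p.2) π
  · -- main case
    have hsnd_aem : AEMeasurable (Prod.snd : E × E → E) π := measurable_snd.aemeasurable
    have hνnm : AEStronglyMeasurable (fun y : E => ‖y‖ ^ 2) ν := hcont.aestronglyMeasurable
    have hsq : Integrable (fun p : E × E => ‖p.2‖ ^ 2) π := by
      have h1 : Integrable (fun y : E => ‖y‖ ^ 2) (π.map Prod.snd) := by
        rw [hsnd]; exact hν2
      exact (integrable_map_measure (by rw [hsnd]; exact hνnm) hsnd_aem).mp h1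
    have hnrm : Integrable (fun p : E × E => ‖p.2‖) π := hY.norm
    have hsm : StronglyMeasurable[firstCoord E] (baryProj π) := stronglyMeasurable_condExp
    -- pointwise Jensen bound
    have hJ1 : ∀ᵐ p ∂π, ‖baryProj π p‖ ≤ (π[fun p : E × E => ‖p.2‖|firstCoord E]) p :=
      aux_norm_condexp_le hm hY
    have hJ2 : ∀ᵐ p ∂π, (π[fun p : E × E => ‖p.2‖|firstCoord E]) p ^ 2
        ≤ (π[fun p : E × E => ‖p.2‖ ^ 2|firstCoord E]) p := aux_condexp_sq hm hnrm hsq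
    have h0 : ∀ᵐ p ∂π, 0 ≤ (π[fun p : E × E => ‖p.2‖|firstCoord E]) p :=
      condExp_nonneg (Filter.Eventually.of_forall fun p => norm_nonneg _)
    have hf2 : ∀ᵐ p ∂π, ‖baryProj π p‖ ^ 2
        ≤ (π[fun p : E × E => ‖p.2‖ ^ 2|firstCoord E]) p := by
      filter_upwards [hJ1, hJ2, h0] with p h1 h2 h3
      calc ‖baryProj π p‖ ^ 2 ≤ (π[fun p : E × E => ‖p.2‖|firstCoord E]) p ^ 2 :=
            pow_le_pow_left₀ (norm_nonneg _) h1 2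
        _ ≤ _ := h2
    -- truncation
    set u : E → ℝ := Set.indicator {y : E | K ≤ ‖y‖ ^ 2} (fun y => ‖y‖ ^ 2) with hu
    set g1 : E × E → ℝ := fun p => u p.2 with hg1
    have hu_meas : AEStronglyMeasurable u ν := hνnm.indicator hsK
    have hg1int : Integrable g1 π := by
      have h1 : Integrable u (π.map Prod.snd) := by rw [hsnd]; exact hν2.indicator hsK
      exact (integrable_map_measure (by rw [hsnd]; exact hu_meas) hsnd_aem).mp h1
    have hg1nn : ∀ p : E × E, 0 ≤ g1 p := fun p =>
      Set.indicator_nonneg (fun y _ => by positivity) _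
    have hptw : ∀ p : E × E, ‖p.2‖ ^ 2 ≤ g1 p + K := by
      intro p
      simp only [hg1, hu, Set.indicator_apply, Set.mem_setOf_eq]
      by_cases hc : K ≤ ‖p.2‖ ^ 2
      · rw [if_pos hc]; linarith
      · rw [if_neg hc]; push_neg at hc; linarith
    have hsplit : ∀ᵐ p ∂π, (π[fun p : E × E => ‖p.2‖ ^ 2|firstCoord E]) p
        ≤ (π[g1|firstCoord E]) p + K := by
      have h1 := condExp_mono (μ := π) (m := firstCoord E) hsq
        (hg1int.add (integrable_const K)) (Filter.Eventually.of_forall fun p => hptw p)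
      have h2 := condExp_add (μ := π) (m := firstCoord E) hg1int (integrable_const (K : ℝ))
      have h3 := condExp_const (μ := π) hm (K : ℝ)
      filter_upwards [h1, h2] with p hp1 hp2
      rw [hp2] at hp1
      simpa [h3] using hp1
    have hff : ∀ᵐ p ∂π, ‖baryProj π p‖ ^ 2 ≤ (π[g1|firstCoord E]) p + K := by
      filter_upwards [hf2, hsplit] with p h1 h2; linarith
    -- integrability of ‖f‖²
    have hfm : AEStronglyMeasurable (baryProj π) π := (hsm.mono hm).aestronglyMeasurable
    have hfsq_meas : AEStronglyMeasurable (fun p => ‖baryProj π p‖ ^ 2) π :=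
      (continuous_pow 2).comp_aestronglyMeasurable hfm.norm
    have hcint : Integrable (fun p => (π[g1|firstCoord E]) p + K) π := by
      exact (integrable_condExp (μ := π) (m := firstCoord E) (f := g1)).add (integrable_const K)
    have hfsqint : Integrable (fun p => ‖baryProj π p‖ ^ 2) π := by
      refine Integrable.mono' hcint hfsq_meas ?_
      filter_upwards [hff] with p hp
      rw [Real.norm_eq_abs, abs_of_nonneg (by positivity)]
      simpa using hp
    have hfsqnn : 0 ≤ᵐ[π] fun p => ‖baryProj π p‖ ^ 2 :=
      Filter.Eventually.of_forall fun p => by positivity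
    -- the set B
    set B : Set (E × E) := {p | M ≤ ‖baryProj π p‖ ^ 2} with hBdef
    have hBm : MeasurableSet[firstCoord E] B :=
      measurableSet_le measurable_const ((hsm.norm.measurable).pow_const 2)
    have hB : MeasurableSet B := hm _ hBm
    -- identify LHS with ∫_B ‖f‖²
    rw [hLHS]
    have hEq : (fun p : E × E => ((fun p : E × E => S m p.1) ⁻¹' {x : E | M ≤ ‖x‖ ^ 2}).indicator
        (fun p : E × E => ‖S m p.1‖ ^ 2) p)
        =ᵐ[π] fun p => B.indicator (fun p => ‖baryProj π p‖ ^ 2) p := by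
      filter_upwards [hae] with p hp
      have hmem1 : p ∈ (fun p : E × E => S m p.1) ⁻¹' {x : E | M ≤ ‖x‖ ^ 2}
          ↔ M ≤ ‖baryProj π p‖ ^ 2 := by
        simp only [Set.mem_preimage, Set.mem_setOf_eq, hp]
      by_cases hMp : M ≤ ‖baryProj π p‖ ^ 2
      · rw [Set.indicator_of_mem (hmem1.mpr hMp), hp,
          Set.indicator_of_mem (show p ∈ B from hMp)]
      · rw [Set.indicator_of_notMem (fun h => hMp (hmem1.mp h)),
          Set.indicator_of_notMem (show p ∉ B from hMp)]
    rw [integral_congr_ae hEq, integral_indicator hB]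
    -- main chain
    have step1 : ∫ p in B, ‖baryProj π p‖ ^ 2 ∂π
        ≤ ∫ p in B, ((π[g1|firstCoord E]) p + K) ∂π :=
      integral_mono_ae hfsqint.integrableOn hcint.integrableOn
        (ae_restrict_of_ae (by filter_upwards [hff] with p hp; simpa using hp))
    have step2 : ∫ p in B, ((π[g1|firstCoord E]) p + K) ∂π
        = ∫ p in B, (π[g1|firstCoord E]) p ∂π + K * (π B).toReal := by
      rw [integral_add (integrable_condExp (μ := π) (m := firstCoord E)
          (f := g1)).integrableOn (integrable_const K).integrableOn,
        setIntegral_const, smul_eq_mul, mul_comm, measureReal_def]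
    have step3 : ∫ p in B, (π[g1|firstCoord E]) p ∂π = ∫ p in B, g1 p ∂π :=
      setIntegral_condExp hm hg1int hBm
    have step4 : ∫ p in B, g1 p ∂π ≤ ∫ p, g1 p ∂π :=
      setIntegral_le_integral hg1int (Filter.Eventually.of_forall hg1nn)
    have step5 : ∫ p, g1 p ∂π = ∫ y in {y : E | K ≤ ‖y‖ ^ 2}, ‖y‖ ^ 2 ∂ν := by
      have h1 : ∫ p, g1 p ∂π = ∫ y, u y ∂(π.map Prod.snd) :=
        (integral_map hsnd_aem (by rw [hsnd]; exact hu_meas)).symm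
      rw [h1, hsnd, hu, integral_indicator hsK]
    -- Markov
    have hint2 : ∫ p, ‖baryProj π p‖ ^ 2 ∂π ≤ ∫ y, ‖y‖ ^ 2 ∂ν := by
      have h1 : ∫ p, ‖baryProj π p‖ ^ 2 ∂π
          ≤ ∫ p, (π[fun p : E × E => ‖p.2‖ ^ 2|firstCoord E]) p ∂π :=
        integral_mono_ae hfsqint integrable_condExp hf2
      have h2 : ∫ p, (π[fun p : E × E => ‖p.2‖ ^ 2|firstCoord E]) p ∂π
          = ∫ p : E × E, ‖p.2‖ ^ 2 ∂π := integral_condExp hm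
      have h3 : ∫ p : E × E, ‖p.2‖ ^ 2 ∂π = ∫ y, ‖y‖ ^ 2 ∂ν := by
        rw [← hsnd] at hνnm ⊢
        exact (integral_map hsnd_aem hνnm).symm
      linarith
    have hMB : M * (π B).toReal ≤ ∫ p, ‖baryProj π p‖ ^ 2 ∂π := by
      refine le_trans (le_trans (le_of_eq (by rw [measureReal_def]))
        (setIntegral_ge_of_const_le_real hB (measure_ne_top π B)
        (fun p hp => hp) hfsqint.integrableOn)) ?_
      exact setIntegral_le_integral hfsqint hfsqnn
    have hπB : K * (π B).toReal ≤ (K / M) * ∫ y, ‖y‖ ^ 2 ∂ν := by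
      have h1 : (π B).toReal ≤ (∫ y, ‖y‖ ^ 2 ∂ν) / M := by
        rw [le_div_iff₀ hM]; nlinarith
      calc K * (π B).toReal ≤ K * ((∫ y, ‖y‖ ^ 2 ∂ν) / M) :=
            mul_le_mul_of_nonneg_left h1 hK
        _ = (K / M) * ∫ y, ‖y‖ ^ 2 ∂ν := by ring
    linarith
  · -- degenerate case: the conditional expectation is 0
    have hb : baryProj π = 0 := condExp_of_not_integrable hY
    rw [hb] at hae
    rw [hLHS]
    have hz : (fun p : E × E => ((fun p : E × E => S m p.1) ⁻¹' {x : E | M ≤ ‖x‖ ^ 2}).indicator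
        (fun p : E × E => ‖S m p.1‖ ^ 2) p) =ᵐ[π] 0 := by
      filter_upwards [hae] with p hp
      have hp0 : S m p.1 = 0 := hp
      rw [Set.indicator_of_notMem]
      · rfl
      · simp only [Set.mem_preimage, Set.mem_setOf_eq, hp0, norm_zero]
        intro h
        simp at h
        linarith
    rw [integral_congr_ae hz]
    simp only [integral_zero, Pi.zero_apply]
    have : 0 ≤ (K / M) * ∫ y, ‖y‖ ^ 2 ∂ν :=
      mul_nonneg (div_nonneg hK hM.le) hν0
    linarith
end
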